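/- arXiv:2008.11118 — 3 statements merged into one kernel-verified Lean document; each statement's English description precedes it below -/
import Mathlib

section
/- For every A-module N, the group G acts on the tensor product B ⊗_A N by additive automorphisms via g • (b ⊗ n) = (g • b) ⊗ n (this is well defined and compatible with the B-module structure), and the canonical A-linear map N → (B ⊗_A N)^G sending n to 1 ⊗ n is bijective. -/
open TensorProduct

/-- The subring of `G`-invariant elements of `B`. -/
def fixedSubring (G B : Type*) [Group G] [CommRing B] [MulSemiringAction G B] : Subring B where
  carrier := {b | ∀ g : G, g • b = b}
  mul_mem' := by intro a b ha hb g; rw [smul_mul', ha, hb]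
  one_mem' := fun g => smul_one g
  add_mem' := by intro a b ha hb g; rw [smul_add, ha, hb]
  zero_mem' := fun g => smul_zero g
  neg_mem' := by intro a ha g; rw [smul_neg, ha]

/-- The action of `g : G` on `B`, as a linear map over the invariant subring `A = B^G`. -/
def fixedSmulLinear (G B : Type*) [Group G] [CommRing B] [MulSemiringAction G B] (g : G) :
    B →ₗ[fixedSubring G B] B where
  toFun b := g • b
  map_add' := smul_add g
  map_smul' := fun a b => by
    show g • ((a : B) • b) = (a : B) • (g • b)
    rw [smul_eq_mul, smul_eq_mul, smul_mul']
    rw [show g • (a : B) = (a : B) from a.2 g]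

/-- The additive automorphism of `B ⊗[fixedSubring G B] N` induced by `g : G`,
acting via `g • (b ⊗ n) = (g • b) ⊗ n`. -/
noncomputable def tensorGAction (G B : Type*) [Group G] [CommRing B] [MulSemiringAction G B]
    (N : Type*) [AddCommGroup N] [Module (fixedSubring G B) N] (g : G) :
    B ⊗[fixedSubring G B] N →ₗ[fixedSubring G B] B ⊗[fixedSubring G B] N :=
  LinearMap.rTensor N (fixedSmulLinear G B g)


section Aux

variable {G B : Type*} [Group G] [Fintype G] [CommRing B] [MulSemiringAction G B]

lemma sum_smul_fixed (b : B) (g : G) :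
    g • (∑ h : G, h • b) = ∑ h : G, h • b := by
  rw [Finset.smul_sum]
  simp_rw [smul_smul]
  exact Fintype.sum_equiv (Equiv.mulLeft g) (fun h => (g * h) • b) (fun h => h • b)
    (fun h => rfl)

lemma invOf_card_fixed (hcard : Invertible (Fintype.card G : B)) (g : G) :
    g • (⅟(Fintype.card G : B)) = ⅟(Fintype.card G : B) := by
  refine (invOf_eq_right_inv ?_).symm
  have : g • ((Fintype.card G : B) * ⅟(Fintype.card G : B)) = g • (1 : B) := by
    rw [mul_invOf_self]
  rw [smul_mul', smul_one] at this
  rwa [show g • (Fintype.card G : B) = (Fintype.card G : B) from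
    map_natCast (MulSemiringAction.toRingHom G B g) _] at this

variable (G B) in
/-- The averaging (Reynolds) operator `b ↦ ⅟|G| * ∑ g • b`, landing in the invariants. -/
noncomputable def reynolds (hcard : Invertible (Fintype.card G : B)) :
    B →ₗ[fixedSubring G B] fixedSubring G B where
  toFun b := ⟨⅟(Fintype.card G : B) * ∑ g : G, g • b, fun g => by
    rw [smul_mul', invOf_card_fixed hcard, sum_smul_fixed]⟩
  map_add' b b' := by
    ext
    simp [smul_add, Finset.sum_add_distrib, mul_add]
  map_smul' a b := by
    ext
    show ⅟(Fintype.card G : B) * ∑ g : G, g • ((a : B) * b)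
      = (a : B) * (⅟(Fintype.card G : B) * ∑ g : G, g • b)
    simp_rw [smul_mul', show ∀ g : G, g • (a : B) = (a : B) from a.2, Finset.mul_sum]
    exact Finset.sum_congr rfl fun g _ => by ring

variable (G B) in
/-- The inclusion of the invariants into `B`, as a linear map. -/
def fixedIncl : fixedSubring G B →ₗ[fixedSubring G B] B where
  toFun := Subtype.val
  map_add' _ _ := rfl
  map_smul' _ _ := rfl

lemma reynolds_one (hcard : Invertible (Fintype.card G : B)) :
    reynolds G B hcard 1 = 1 := by
  ext
  show ⅟(Fintype.card G : B) * ∑ g : G, g • (1 : B) = 1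
  simp [smul_one, Finset.sum_const]

lemma incl_comp_reynolds (hcard : Invertible (Fintype.card G : B)) (b : B) :
    fixedIncl G B (reynolds G B hcard b)
      = ⅟(Fintype.card G : B) * ∑ g : G, g • b := rfl

end Aux

/-- `G` acts on `B ⊗_A N` by additive automorphisms via `g • (b ⊗ n) = (g • b) ⊗ n`,
compatibly with the `B`-module structure, and the canonical map
`N → (B ⊗_A N)^G`, `n ↦ 1 ⊗ n`, is bijective. -/
theorem tensor_invariants_eq_base
    {G B : Type*} [Group G] [Fintype G] [CommRing B] [MulSemiringAction G B]
    (hcard : Invertible (Fintype.card G : B))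
    (N : Type*) [AddCommGroup N] [Module (fixedSubring G B) N] :
    (∀ (g : G) (b : B) (n : N),
        tensorGAction G B N g (b ⊗ₜ n) = (g • b) ⊗ₜ n) ∧
    (∀ x : B ⊗[fixedSubring G B] N, tensorGAction G B N 1 x = x) ∧
    (∀ (g g' : G) (x : B ⊗[fixedSubring G B] N),
        tensorGAction G B N (g * g') x = tensorGAction G B N g (tensorGAction G B N g' x)) ∧
    (∀ (g : G) (b : B) (x : B ⊗[fixedSubring G B] N),
        tensorGAction G B N g (b • x) = (g • b) • tensorGAction G B N g x) ∧
    Function.Injective (fun n : N => (1 : B) ⊗ₜ[fixedSubring G B] n) ∧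
    (∀ x : B ⊗[fixedSubring G B] N, (∀ g : G, tensorGAction G B N g x = x) →
        ∃ n : N, (1 : B) ⊗ₜ[fixedSubring G B] n = x) := by
  classical
  -- the retraction `ρ : B ⊗ N → N`
  set E := reynolds G B hcard with hE
  set ρ : B ⊗[fixedSubring G B] N →ₗ[fixedSubring G B] N :=
    (TensorProduct.lid (fixedSubring G B) N).toLinearMap ∘ₗ LinearMap.rTensor N E with hρ
  have hρ_tmul : ∀ (b : B) (n : N), ρ (b ⊗ₜ n) = (E b) • n := fun b n => rfl
  have hρ_one : ∀ n : N, ρ ((1 : B) ⊗ₜ n) = n := fun n => by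
    rw [hρ_tmul, reynolds_one, one_smul]
  refine ⟨fun g b n => rfl, ?_, ?_, ?_, ?_, ?_⟩
  · intro x
    induction x using TensorProduct.induction_on with
    | zero => simp
    | tmul b n => simp [tensorGAction, fixedSmulLinear]
    | add x y hx hy => simp [map_add, hx, hy]
  · intro g g' x
    induction x using TensorProduct.induction_on with
    | zero => simp
    | tmul b n => simp [tensorGAction, fixedSmulLinear, mul_smul]
    | add x y hx hy => simp [map_add, hx, hy]
  · intro g b x
    induction x using TensorProduct.induction_on with
    | zero => simp
    | tmul b' n =>
        rw [smul_tmul', smul_eq_mul]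
        rw [show tensorGAction G B N g ((b * b') ⊗ₜ[fixedSubring G B] n)
            = (g • (b * b')) ⊗ₜ[fixedSubring G B] n from rfl,
          show tensorGAction G B N g (b' ⊗ₜ[fixedSubring G B] n)
            = (g • b') ⊗ₜ[fixedSubring G B] n from rfl,
          smul_mul', smul_tmul', smul_eq_mul]
    | add x y hx hy => simp only [smul_add, map_add, hx, hy]
  · intro n n' h
    have := congrArg ρ h
    rwa [hρ_one, hρ_one] at this
  · intro x hx
    refine ⟨ρ x, ?_⟩
    have key : ∀ y : B ⊗[fixedSubring G B] N, ((1 : B) ⊗ₜ[fixedSubring G B] (ρ y) : B ⊗[fixedSubring G B] N)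
        = LinearMap.rTensor N ((fixedIncl G B) ∘ₗ E) y := by
      intro y
      induction y using TensorProduct.induction_on with
      | zero => simp
      | tmul b n =>
          rw [hρ_tmul, LinearMap.rTensor_tmul, tmul_smul]
          rw [smul_tmul', LinearMap.comp_apply]
          congr 1
          show (E b : B) • (1 : B) = fixedIncl G B (E b)
          rw [smul_eq_mul, mul_one]; rfl
      | add y z hy hz => rw [map_add, map_add, tmul_add, hy, hz]
    rw [key]
    -- now compute `rTensor (ι ∘ E) x` using invariance of `x`
    have expand : ∀ y : B ⊗[fixedSubring G B] N, LinearMap.rTensor N ((fixedIncl G B) ∘ₗ E) y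
        = (⟨⅟(Fintype.card G : B), invOf_card_fixed hcard⟩ : fixedSubring G B)
            • ∑ g : G, tensorGAction G B N g y := by
      intro y
      induction y using TensorProduct.induction_on with
      | zero => simp
      | tmul b n =>
          rw [LinearMap.rTensor_tmul, LinearMap.comp_apply, incl_comp_reynolds]
          simp only [show ∀ g : G, tensorGAction G B N g (b ⊗ₜ[fixedSubring G B] n)
              = (g • b) ⊗ₜ[fixedSubring G B] n from fun g => rfl]
          rw [← sum_tmul, smul_tmul']
          rfl
      | add y z hy hz =>
          simp only [map_add, hy, hz, Finset.sum_add_distrib, smul_add]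
    rw [expand]
    simp_rw [hx]
    rw [Finset.sum_const, Finset.card_univ]
    rw [← Nat.cast_smul_eq_nsmul (fixedSubring G B) (Fintype.card G) x, smul_smul]
    convert one_smul (fixedSubring G B) x using 2
    ext
    show ⅟(Fintype.card G : B) * ((Fintype.card G : fixedSubring G B) : B) = 1
    rw [show ((Fintype.card G : fixedSubring G B) : B) = (Fintype.card G : B) from
      map_natCast (fixedSubring G B).subtype _, invOf_mul_self]
end

section
/- Let M be a finitely generated B-module with compatible G-action. Suppose that for every field k, every ring homomorphism φ : B → k, and every g ∈ G stabilizing φ, the element g acts trivially on the fiber M ⊗_{B,φ} k. Then M is generated as a B-module by its invariants M^G, i.e., the counit map B ⊗_A M^G → M, b ⊗ m ↦ b • m, is surjective. -/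
/-!
If the invariants do not span `M`, Nakayama's lemma yields a maximal ideal `𝔪` and a nonzero
`B`-linear functional `ℓ : M → B ⧸ 𝔪` vanishing on `M^G`. Evaluating `ℓ` on the invariant vectors
`∑ g, g • (a • x)` gives `∑ g, ℓ (g • x) * χ_g a = 0` for all `a : B`, where `χ_g a = g • a mod 𝔪`
are characters of the multiplicative monoid of `B`. By Dedekind's independence of characters the
coefficients of the characters equal to `χ_1` sum to zero. Those `g` form the inertia group `I` of
`𝔪`, which acts trivially on the fiber, so `|I| * ℓ x = 0`; and `|I|` divides the unit `|G|`.
-/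

open TensorProduct

/-- A `B`-module `M` with a compatible `G`-action: `G` acts on `M` by additive
automorphisms and `g • (b • m) = (g • b) • (g • m)`. -/
class CompatibleAction (G B M : Type*) [Group G] [CommRing B] [MulSemiringAction G B]
    [AddCommGroup M] [Module B M] extends DistribMulAction G M where
  smul_smul_comm : ∀ (g : G) (b : B) (m : M), g • (b • m) = (g • b) • (g • m)

open Classical in
theorem sum_fiber_eq_zero_of_forall_sum_mul_apply_eq_zero {ι R k : Type*} [Fintype ι]
    [MulOneClass R] [CommRing k] [IsDomain k] (χ : ι → R →* k) (c : ι → k)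
    (h : ∀ a, ∑ i, c i * χ i a = 0) (f : R →* k) :
    ∑ i with χ i = f, c i = 0 := by
  have hzero := linearIndependent_iff.mp (linearIndependent_monoidHom R k)
    (∑ i, Finsupp.single (χ i) (c i)) (by ext a; simp [Finsupp.linearCombination_single, h])
  simpa [Finsupp.finsetSum_apply, Finsupp.single_apply, Finset.sum_ite] using
    DFunLike.congr_fun hzero f

theorem Subgroup.natCast_card_ne_zero_of_isUnit {G R : Type*} [Group G] [CommSemiring R]
    [Nontrivial R] (hG : IsUnit (Nat.card G : R)) (H : Subgroup G) : (Nat.card H : R) ≠ 0 := by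
  obtain ⟨t, ht⟩ := H.card_subgroup_dvd_card
  rw [ht, Nat.cast_mul] at hG
  exact (isUnit_of_mul_isUnit_left hG).ne_zero

theorem smul_sum_univ_smul {G M : Type*} [Group G] [Fintype G] [AddCommMonoid M]
    [DistribMulAction G M] (h : G) (x : M) : h • ∑ g : G, g • x = ∑ g : G, g • x := by
  simp only [Finset.smul_sum, smul_smul]
  exact Equiv.sum_comp (Equiv.mulLeft h) (fun g => g • x)

theorem mem_inertia_ker_algebraMap_iff {G B k : Type*} [Group G] [CommRing B]
    [MulSemiringAction G B] [Ring k] [Algebra B k] (g : G) :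
    g ∈ (RingHom.ker (algebraMap B k)).inertia G ↔
      ∀ b : B, algebraMap B k (g • b) = algebraMap B k b := by
  simp [RingHom.mem_ker, sub_eq_zero]

theorem LinearMap.apply_eq_apply_of_tmul_one_eq {R M A : Type*} [CommSemiring R]
    [AddCommMonoid M] [Module R M] [Semiring A] [Algebra R A] (ℓ : M →ₗ[R] A) {x y : M}
    (h : x ⊗ₜ[R] (1 : A) = y ⊗ₜ[R] (1 : A)) : ℓ x = ℓ y := by
  simpa using congrArg (TensorProduct.lift ((LinearMap.mul R A).flip ∘ₗ ℓ)) h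

theorem Module.exists_isMaximal_smul_top_ne_top {R Q : Type*} [CommRing R] [AddCommGroup Q]
    [Module R Q] [Module.Finite R Q] [Nontrivial Q] :
    ∃ m : Ideal R, m.IsMaximal ∧ m • (⊤ : Submodule R Q) ≠ ⊤ := by
  obtain ⟨m, hm, hann⟩ := Ideal.exists_le_maximal (Module.annihilator R Q)
    (Module.annihilator_eq_top_iff.not.mpr (not_subsingleton Q))
  refine ⟨m, hm, fun htop => hm.ne_top (m.eq_top_iff_one.mpr ?_)⟩
  obtain ⟨r, hr1, hr⟩ := Submodule.exists_sub_one_mem_and_smul_eq_zero_of_fg_of_le_smul m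
    (⊤ : Submodule R Q) Module.Finite.fg_top htop.ge
  have hrm : r ∈ m := hann (Module.mem_annihilator.mpr fun q => hr q trivial)
  simpa using m.sub_mem hrm hr1

theorem Module.exists_isMaximal_linearMap_quotient_ne_zero {R Q : Type*} [CommRing R]
    [AddCommGroup Q] [Module R Q] [Module.Finite R Q] [Nontrivial Q] :
    ∃ m : Ideal R, m.IsMaximal ∧ ∃ f : Q →ₗ[R] R ⧸ m, f ≠ 0 := by
  obtain ⟨m, hm, hne⟩ := Module.exists_isMaximal_smul_top_ne_top (R := R) (Q := Q)
  let := Ideal.Quotient.field m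
  have := Submodule.Quotient.nontrivial_iff.mpr hne
  obtain ⟨q, hq⟩ := exists_ne (0 : Q ⧸ m • (⊤ : Submodule R Q))
  obtain ⟨f, hf⟩ := Module.Projective.exists_dual_ne_zero (R ⧸ m) hq
  refine ⟨m, hm, f.restrictScalars R ∘ₗ (m • ⊤ : Submodule R Q).mkQ, fun h => hf ?_⟩
  obtain ⟨x, rfl⟩ := Submodule.mkQ_surjective _ q
  exact LinearMap.congr_fun h x

theorem linearMap_eq_zero_of_apply_fixed_eq_zero {G B M k : Type*} [Group G] [Fintype G]
    [CommRing B] [MulSemiringAction G B] [AddCommGroup M] [Module B M] [CompatibleAction G B M]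
    [CommRing k] [IsDomain k] [Algebra B k] (ℓ : M →ₗ[B] k)
    (hcard : (Nat.card ((RingHom.ker (algebraMap B k)).inertia G) : k) ≠ 0)
    (hfiber : ∀ g ∈ (RingHom.ker (algebraMap B k)).inertia G, ∀ x, ℓ (g • x) = ℓ x)
    (hfixed : ∀ x : M, (∀ g : G, g • x = x) → ℓ x = 0) : ℓ = 0 := by
  classical
  ext x
  let χ : G → B →* k := fun g =>
    ((algebraMap B k).comp (MulSemiringAction.toRingHom G B g) : B →* k)
  have hχ : ∀ g, χ g = χ 1 ↔ g ∈ (RingHom.ker (algebraMap B k)).inertia G := by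
    intro g
    rw [mem_inertia_ker_algebraMap_iff, DFunLike.ext_iff]
    simp [χ]
  have hsum : ∀ a : B, ∑ g, ℓ (g • x) * χ g a = 0 := by
    intro a
    simpa [CompatibleAction.smul_smul_comm, Algebra.smul_def, mul_comm, χ] using
      hfixed _ fun h => smul_sum_univ_smul h (a • x)
  have hinertia := sum_fiber_eq_zero_of_forall_sum_mul_apply_eq_zero χ _ hsum (χ 1)
  rw [Finset.sum_congr rfl fun g hg => hfiber g ((hχ g).1 (Finset.mem_filter.1 hg).2) x,
    Finset.sum_const, nsmul_eq_mul] at hinertia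
  have hfilter : (Finset.univ.filter fun g => χ g = χ 1).card =
      Nat.card ((RingHom.ker (algebraMap B k)).inertia G) := by
    simp_rw [hχ]
    rw [Nat.card_eq_fintype_card, Fintype.card_subtype]
  rw [hfilter] at hinertia
  exact (mul_eq_zero.mp hinertia).resolve_left hcard

/-- If for every field-valued point `φ : B → k` and every `g ∈ G` stabilizing `φ`, the
element `g` acts trivially on the fiber `M ⊗_{B,φ} k`, then the finitely generated
`B`-module `M` is generated by its invariants `M^G`. -/
theorem generated_by_invariants_of_trivial_fiber_actions
    {G : Type*} {B : Type u} {M : Type*} [Group G] [Fintype G] [CommRing B]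
    [MulSemiringAction G B] [AddCommGroup M] [Module B M] [CompatibleAction G B M]
    (hcard : Invertible (Fintype.card G : B))
    (hfg : Module.Finite B M)
    (htriv : ∀ (k : Type u) [Field k], ∀ (φ : B →+* k) (g : G),
      (∀ b : B, φ (g • b) = φ b) →
      ∀ m : M,
        haveI : Algebra B k := φ.toAlgebra
        (g • m) ⊗ₜ[B] (1 : k) = m ⊗ₜ[B] (1 : k)) :
    Submodule.span B {m : M | ∀ g : G, g • m = m} = ⊤ := by
  set N := Submodule.span B {m : M | ∀ g : G, g • m = m}
  by_contra hN
  have := Submodule.Quotient.nontrivial_iff.mpr hN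
  obtain ⟨𝔪, h𝔪, f, hf⟩ :=
    Module.exists_isMaximal_linearMap_quotient_ne_zero (R := B) (Q := M ⧸ N)
  let := Ideal.Quotient.field 𝔪
  have hunit : IsUnit (Nat.card G : B ⧸ 𝔪) := by
    rw [Nat.card_eq_fintype_card, ← map_natCast (algebraMap B (B ⧸ 𝔪))]
    exact (isUnit_of_invertible _).map _
  have hfiber : ∀ g ∈ (RingHom.ker (algebraMap B (B ⧸ 𝔪))).inertia G, ∀ x,
      (f ∘ₗ N.mkQ) (g • x) = (f ∘ₗ N.mkQ) x := by
    intro g hg x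
    have h := htriv (B ⧸ 𝔪) (algebraMap B (B ⧸ 𝔪)) g
      ((mem_inertia_ker_algebraMap_iff g).1 hg) x
    -- `htriv` tensors along `φ.toAlgebra`, which is not syntactically the quotient algebra.
    rw [Algebra.algebra_ext (algebraMap B (B ⧸ 𝔪)).toAlgebra inferInstance fun _ => rfl] at h
    exact LinearMap.apply_eq_apply_of_tmul_one_eq _ h
  have hℓ := linearMap_eq_zero_of_apply_fixed_eq_zero (f ∘ₗ N.mkQ)
    (Subgroup.natCast_card_ne_zero_of_isUnit hunit _) hfiber
    fun x hx => by simp [(Submodule.Quotient.mk_eq_zero N).2 (Submodule.subset_span hx)]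
  exact hf (LinearMap.cancel_right N.mkQ_surjective |>.1 (by rw [hℓ, LinearMap.zero_comp]))
end

section
/- Let I be a finitely generated ideal of B such that I is generated by its degree of invariance, namely I = (I ∩ A)·B (the ideal of B generated by the invariant elements of I). Then I ∩ A is a finitely generated ideal of A. -/
/-!
The Reynolds operator `b ↦ ⅟|G| * ∑ g • b` is a `B^G`-linear retraction of `B^G → B`, so every
ideal `J` of `A = B^G` is contracted from its extension: `JB ∩ A = J`. Since `I = (I ∩ A)B` is
finitely generated, finitely many elements of `I ∩ A` generate it; the ideal `J₀` of `A` they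
generate then satisfies `J₀ = J₀B ∩ A = I ∩ A`.
-/

namespace Ideal

variable {R S : Type*} [CommRing R] [CommRing S]

theorem exists_fg_le_map_eq_of_fg_map {f : R →+* S} {J : Ideal R}
    (h : (J.map f).FG) : ∃ J₀ ≤ J, J₀.FG ∧ J₀.map f = J.map f := by
  classical
  obtain ⟨t, htJ, hspan⟩ := (Submodule.fg_span_iff_fg_span_finset_subset _).mp h
  obtain ⟨s, hsJ, rfl⟩ := Finset.subset_set_image_iff.mp htJ
  refine ⟨span s, span_le.mpr hsJ, ⟨s, rfl⟩, ?_⟩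
  rw [map_span, ← Finset.coe_image]
  exact hspan.symm

variable [Algebra R S]

theorem comap_map_eq_self_of_retraction (ρ : S →ₗ[R] R) (hρ : ∀ r, ρ (algebraMap R S r) = r)
    (J : Ideal R) : (J.map (algebraMap R S)).comap (algebraMap R S) = J := by
  refine le_antisymm (fun x hx => ?_) le_comap_map
  suffices ∀ y ∈ J.map (algebraMap R S), ∀ t, ρ (t * y) ∈ J by simpa [hρ] using this _ hx 1
  intro y hy
  induction hy using Submodule.span_induction with
  | mem _ hs =>
    obtain ⟨j, hj, rfl⟩ := hs
    intro t
    rw [mul_comm, ← Algebra.smul_def, map_smul, smul_eq_mul]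
    exact J.mul_mem_right _ hj
  | zero => simp
  | add _ _ _ _ hx hy => intro t; rw [mul_add, map_add]; exact J.add_mem (hx t) (hy t)
  | smul a _ _ hx => intro t; rw [smul_eq_mul, ← mul_assoc]; exact hx (t * a)

theorem fg_of_fg_map_of_retraction (ρ : S →ₗ[R] R) (hρ : ∀ r, ρ (algebraMap R S r) = r)
    {J : Ideal R} (h : (J.map (algebraMap R S)).FG) : J.FG := by
  obtain ⟨J₀, -, hJ₀, hmap⟩ := exists_fg_le_map_eq_of_fg_map h
  rwa [← comap_map_eq_self_of_retraction ρ hρ J, ← hmap, comap_map_eq_self_of_retraction ρ hρ]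

end Ideal

namespace fixedSubring

variable {G B : Type*} [Group G] [CommRing B] [MulSemiringAction G B]

theorem invOf_mem {x : B} [Invertible x] (hx : x ∈ fixedSubring G B) :
    ⅟x ∈ fixedSubring G B := by
  intro g
  refine (invOf_eq_right_inv ?_).symm
  calc x * g • ⅟x = g • (x * ⅟x) := by rw [smul_mul', hx g]
    _ = 1 := by rw [mul_invOf_self, smul_one]

variable [Fintype G]

theorem sum_smul_mem (b : B) : ∑ g : G, g • b ∈ fixedSubring G B := by
  intro h
  rw [Finset.smul_sum]
  exact Fintype.sum_bijective (h * ·) (Group.mulLeft_bijective h) _ _ fun g => smul_smul h g b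

variable (G B) [Invertible (Fintype.card G : B)]

noncomputable def reynolds : B →ₗ[fixedSubring G B] fixedSubring G B where
  toFun b := ⟨⅟(Fintype.card G : B) * ∑ g : G, g • b,
    mul_mem (invOf_mem (natCast_mem _ _)) (sum_smul_mem b)⟩
  map_add' b c := by ext; simp [Finset.sum_add_distrib, mul_add]
  map_smul' a b := by
    ext
    simp only [Subring.smul_def, smul_eq_mul, smul_mul', a.2 _, ← Finset.mul_sum,
      RingHom.id_apply, Subring.coe_mul]
    exact mul_left_comm _ _ _

theorem reynolds_algebraMap (a : fixedSubring G B) :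
    reynolds G B (algebraMap (fixedSubring G B) B a) = a := by
  ext
  simp only [reynolds, LinearMap.coe_mk, AddHom.coe_mk, Algebra.algebraMap_ofSubsemiring_apply,
    a.2 _, Finset.sum_const, Finset.card_univ, nsmul_eq_mul, invOf_mul_cancel_left]

end fixedSubring

/-- If a finitely generated ideal `I` of `B` is generated by its invariant elements,
i.e. `I = (I ∩ A)·B` where `A = B^G`, then `I ∩ A` is a finitely generated ideal of `A`. -/
theorem contraction_fg_of_generated_by_invariants
    {G B : Type*} [Group G] [Fintype G] [CommRing B] [MulSemiringAction G B]
    (hcard : Invertible (Fintype.card G : B))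
    (I : Ideal B) (hfg : I.FG)
    (hgen : I = Ideal.map (fixedSubring G B).subtype
      (Ideal.comap (fixedSubring G B).subtype I)) :
    (Ideal.comap (fixedSubring G B).subtype I).FG :=
  Ideal.fg_of_fg_map_of_retraction (fixedSubring.reynolds G B)
    (fixedSubring.reynolds_algebraMap G B) (hgen ▸ hfg)
end
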